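/- arXiv:2106.08205 — 3 statements merged into one kernel-verified Lean document; each statement's English description precedes it below -/
import Mathlib

section
/- Let γ, μ, κ, τ > 0 with γ·e^{−μτ} > μ, and set K = (γ·e^{−μτ} − μ)/κ. Let x : [−τ, ∞) → ℝ be a positive continuous solution of x'(t) = γ·x(t−τ)·exp(−μτ − κ∫_{t−τ}^{t} x(s) ds) − μ·x(t) − κ·x(t)² on (0, ∞). Then limsup_{t→∞} x(t) ≤ K. -/
/-!
Suppose `L = limsup x > K`. For large `t` the past value `x (t - τ)` is below `L + η`, and the
exponential factor is at most `e^{-μτ}` since `x > 0`, so `x' ≤ γ e^{-μτ} (L + η) - μ x - κ x²`.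
Because `L > K`, for small `η > 0` this bound is uniformly negative wherever `x ≥ L - η`: the
solution must drop below `L - η` and can never climb back, hence `limsup x ≤ L - η < L`.
-/

open Filter Set Topology Real

section Comparison

variable {f f' : ℝ → ℝ} {T c δ : ℝ}

theorem exists_gt_le_of_deriv_le_neg (hδ : 0 < δ) (hf : ContinuousOn f (Ici T))
    (hderiv : ∀ t > T, HasDerivAt f (f' t) t) (hlow : BddBelow (f '' Ici T))
    (hneg : ∀ t > T, c < f t → f' t ≤ -δ) : ∃ t > T, f t ≤ c := by
  by_contra! hgt
  obtain ⟨m, hm⟩ := hlow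
  have hslope : ∀ t ≥ T, f t - f T ≤ -δ * (t - T) := by
    refine fun t ht ↦ (convex_Ici T).image_sub_le_mul_sub_of_deriv_le hf ?_ ?_ T self_mem_Ici
      t ht ht
    · rw [interior_Ici]
      exact fun t ht ↦ (hderiv t ht).differentiableAt.differentiableWithinAt
    · rw [interior_Ici]
      intro t ht
      rw [(hderiv t ht).deriv]
      exact hneg t ht (hgt t ht)
  have hmT : m ≤ f T := hm (mem_image_of_mem f self_mem_Ici)
  set t := T + (f T - m) / δ + 1
  have htT : T ≤ t := by have := div_nonneg (sub_nonneg.2 hmT) hδ.le; linarith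
  have hmt : m ≤ f t := hm (mem_image_of_mem f htT)
  have hdrop : δ * (t - T) = f T - m + δ := by
    rw [show t - T = (f T - m) / δ + 1 by ring, mul_add, mul_div_cancel₀ _ hδ.ne', mul_one]
  linarith [hslope t htT]

theorem le_of_le_of_deriv_neg_of_eq (hf : ContinuousOn f (Ici T))
    (hderiv : ∀ t ≥ T, HasDerivAt f (f' t) t) (hT : f T ≤ c)
    (hneg : ∀ t ≥ T, f t = c → f' t < 0) : ∀ t ≥ T, f t ≤ c :=
  fun _ ht ↦ image_le_of_deriv_right_lt_deriv_boundary (hf.mono Icc_subset_Ici_self)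
    (fun s hs ↦ (hderiv s hs.1).hasDerivWithinAt) hT (fun _ ↦ hasDerivAt_const _ c)
    (fun s hs ↦ hneg s hs.1) ⟨ht, le_rfl⟩

theorem eventually_le_of_deriv_le_neg (hδ : 0 < δ) (hf : ContinuousOn f (Ici T))
    (hderiv : ∀ t > T, HasDerivAt f (f' t) t) (hlow : BddBelow (f '' Ici T))
    (hneg : ∀ t > T, c ≤ f t → f' t ≤ -δ) : ∀ᶠ t in atTop, f t ≤ c := by
  obtain ⟨t₁, ht₁T, ht₁⟩ :=
    exists_gt_le_of_deriv_le_neg hδ hf hderiv hlow fun t ht h ↦ hneg t ht h.le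
  refine eventually_atTop.2 ⟨t₁, le_of_le_of_deriv_neg_of_eq
    (hf.mono (Ici_subset_Ici.2 ht₁T.le)) (fun t ht ↦ hderiv t (ht₁T.trans_le ht)) ht₁ ?_⟩
  intro t ht hc
  linarith [hneg t (ht₁T.trans_le ht) hc.ge]

end Comparison

theorem exists_pos_lt_and_mul_add_lt {a μ κ L : ℝ} (hL : 0 < L)
    (h : a * L < μ * L + κ * L ^ 2) :
    ∃ η > 0, η < L ∧ a * (L + η) < μ * (L - η) + κ * (L - η) ^ 2 := by
  have hmargin : ∀ᶠ η in 𝓝 (0 : ℝ), a * (L + η) < μ * (L - η) + κ * (L - η) ^ 2 :=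
    ContinuousAt.eventually_lt (by fun_prop) (by fun_prop) (by simpa using h)
  have hsmall := (hmargin.and (eventually_lt_nhds hL)).filter_mono
    (nhdsWithin_le_nhds (s := Ioi 0))
  obtain ⟨η, ⟨hη, hηL⟩, hη₀⟩ := (hsmall.and self_mem_nhdsWithin).exists
  exact ⟨η, hη₀, hηL, hη⟩

section MixedLogistic

variable {γ μ κ τ : ℝ} {x : ℝ → ℝ}

noncomputable def mixedLogisticRHS (γ μ κ τ : ℝ) (x : ℝ → ℝ) (t : ℝ) : ℝ :=
  γ * x (t - τ) * exp (-μ * τ - κ * ∫ s in (t - τ)..t, x s) - μ * x t - κ * (x t) ^ 2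

theorem mixedLogisticRHS_le (hγ : 0 ≤ γ) (hκ : 0 ≤ κ) (hτ : 0 ≤ τ) {t : ℝ}
    (hx : ∀ s ∈ Icc (t - τ) t, 0 ≤ x s) :
    mixedLogisticRHS γ μ κ τ x t ≤ γ * exp (-μ * τ) * x (t - τ) - μ * x t - κ * (x t) ^ 2 := by
  have hint : 0 ≤ ∫ s in (t - τ)..t, x s :=
    intervalIntegral.integral_nonneg (by linarith) hx
  have hexp : exp (-μ * τ - κ * ∫ s in (t - τ)..t, x s) ≤ exp (-μ * τ) :=
    exp_le_exp.2 (by nlinarith)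
  have hbirth := mul_le_mul_of_nonneg_left hexp
    (mul_nonneg hγ (hx (t - τ) ⟨le_rfl, by linarith⟩))
  unfold mixedLogisticRHS
  linarith

theorem mixedLogistic_eventually_le_of_eventually_le (hγ : 0 ≤ γ) (hμ : 0 ≤ μ) (hκ : 0 ≤ κ)
    (hτ : 0 ≤ τ) (hx_cont : ContinuousOn x (Ici (-τ))) (hx_nonneg : ∀ t, -τ ≤ t → 0 ≤ x t)
    (hx_ode : ∀ t > (0 : ℝ), HasDerivAt x (mixedLogisticRHS γ μ κ τ x t) t)
    {M c : ℝ} (hM : ∀ᶠ t in atTop, x t ≤ M) (hc : 0 ≤ c)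
    (hMc : γ * exp (-μ * τ) * M < μ * c + κ * c ^ 2) :
    ∀ᶠ t in atTop, x t ≤ c := by
  obtain ⟨T₀, hT₀⟩ := eventually_atTop.1 hM
  set T := max T₀ 0 + τ
  have hT₀T : T₀ ≤ T - τ := by simp [T]
  have hT : 0 ≤ T - τ := by simp [T]
  refine eventually_le_of_deriv_le_neg (T := T) (sub_pos.2 hMc) (hx_cont.mono (Ici_subset_Ici.2 ?_))
    (fun t ht ↦ hx_ode t ?_) ⟨0, ?_⟩ ?_
  · linarith
  · linarith
  · rintro _ ⟨t, ht, rfl⟩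
    exact hx_nonneg t (by linarith [mem_Ici.1 ht])
  · intro t ht hct
    have hrhs := mixedLogisticRHS_le (μ := μ) (t := t) hγ hκ hτ fun s hs ↦ hx_nonneg s (by linarith [hs.1])
    have hbirth := mul_le_mul_of_nonneg_left (hT₀ (t - τ) (by linarith))
      (mul_nonneg hγ (exp_pos (-μ * τ)).le)
    have hlin := mul_le_mul_of_nonneg_left hct hμ
    have hquad := mul_le_mul_of_nonneg_left (pow_le_pow_left₀ hc hct 2) hκ
    linarith

end MixedLogistic

/-- Eventual boundedness by the delay reduced carrying capacity: any positive continuous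
solution of the mixed alternative logistic DDE satisfies
`limsup_{t→∞} x(t) ≤ K = (γ e^{-μτ} - μ)/κ`. -/
theorem stmt_10 (γ μ κ τ : ℝ) (hγ : 0 < γ) (hμ : 0 < μ) (hκ : 0 < κ) (hτ : 0 < τ)
    (hR0 : μ < γ * Real.exp (-μ * τ))
    (x : ℝ → ℝ)
    (hx_cont : ContinuousOn x (Set.Ici (-τ)))
    (hx_pos : ∀ t, -τ ≤ t → 0 < x t)
    (hx_ode : ∀ t > (0 : ℝ), HasDerivAt x
      (γ * x (t - τ) * Real.exp (-μ * τ - κ * ∫ s in (t - τ)..t, x s)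
        - μ * x t - κ * (x t) ^ 2) t) :
    Filter.limsup x Filter.atTop ≤ (γ * Real.exp (-μ * τ) - μ) / κ := by
  have hK : 0 < (γ * exp (-μ * τ) - μ) / κ := div_pos (by linarith) hκ
  by_cases hbdd : IsBoundedUnder (· ≤ ·) atTop x
  swap
  · rw [Real.limsup_of_not_isBoundedUnder hbdd]
    exact hK.le
  have hx_nonneg : ∀ t, -τ ≤ t → 0 ≤ x t := fun t ht ↦ (hx_pos t ht).le
  have hcobdd : IsCoboundedUnder (· ≤ ·) atTop x := (isBoundedUnder_of_eventually_ge
    (eventually_atTop.2 ⟨-τ, hx_nonneg⟩)).isCoboundedUnder_le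
  by_contra! hKL
  set L := limsup x atTop
  have hL : 0 < L := hK.trans hKL
  have hgrowth : γ * exp (-μ * τ) - μ < κ * L := (div_lt_iff₀' hκ).1 hKL
  obtain ⟨η, hη, hηL, hmargin⟩ :=
    exists_pos_lt_and_mul_add_lt (a := γ * exp (-μ * τ)) (μ := μ) (κ := κ) hL (by nlinarith)
  have hM : ∀ᶠ t in atTop, x t ≤ L + η :=
    (eventually_lt_of_limsup_lt (by linarith) hbdd).mono fun _ ↦ le_of_lt
  have hc := mixedLogistic_eventually_le_of_eventually_le hγ.le hμ.le hκ.le hτ.le hx_cont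
    hx_nonneg hx_ode hM (by linarith) hmargin
  linarith [limsup_le_of_le hcobdd hc]
end

section
/- For i = 1, 2 let γ_i, μ_i, κ_i, α_i, τ_i > 0 with γ₁·e^{−μ₁τ₁} ≤ μ₁ and γ₂·e^{−μ₂τ₂} ≤ μ₂ (i.e., R₀⁽¹⁾ ≤ 1 and R₀⁽²⁾ ≤ 1). Then every bounded continuous positive solution (x₁(t), x₂(t)) of the competition system x₁'(t) = γ₁·x₁(t−τ₁)·exp(−μ₁τ₁ − ∫_{t−τ₁}^{t}(κ₁x₁(s) + α₂x₂(s))ds) − μ₁x₁(t) − κ₁x₁²(t) − α₂x₁(t)x₂(t), x₂'(t) = γ₂·x₂(t−τ₂)·exp(−μ₂τ₂ − ∫_{t−τ₂}^{t}(κ₂x₂(s) + α₁x₁(s))ds) − μ₂x₂(t) − κ₂x₂²(t) − α₁x₁(t)x₂(t) converges to the extinction equilibrium E₀ = (0, 0) as t → ∞. -/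
/-!
Write `g` for the competition pressure (`κ₁ x₁ + α₂ x₂` for the first species) and
`G t = ∫₀ᵗ g`. The integrating factor `e^G` turns the equation for `x` into the linear delay
equation `u' = a u(t - τ) - μ u` for `u = x e^G`, with `a = γ e^{-μτ} ≤ μ`; its Lyapunov
functional `u t + a ∫_{t-τ}^t u` is nonincreasing, so `u` is bounded. If `G → ∞`, then
`x = u e^{-G} → 0`. Otherwise `∫ x ≤ ∫ g / κ` is finite, hence so is `∫ u`; then `u` and its
derivative are integrable, so `u → 0`, and `x ≤ u` on `t ≥ 0` since `G ≥ 0` there.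
-/

open Filter Set Real MeasureTheory intervalIntegral Topology

section LinearDelay

variable {u : ℝ → ℝ}

theorem integral_delay_eq_sub (hu : Continuous u) (τ t : ℝ) :
    ∫ s in (t - τ)..t, u s = (∫ s in 0..t, u s) - ∫ s in 0..(t - τ), u s :=
  (integral_interval_sub_left (hu.intervalIntegrable _ _) (hu.intervalIntegrable _ _)).symm

theorem hasDerivAt_integral_delay (hu : Continuous u) (τ t : ℝ) :
    HasDerivAt (fun t => ∫ s in (t - τ)..t, u s) (u t - u (t - τ)) t := by
  have hU : ∀ b, HasDerivAt (fun b => ∫ s in 0..b, u s) (u b) b := fun b =>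
    (hu.integral_hasStrictDerivAt 0 b).hasDerivAt
  simp only [integral_delay_eq_sub hu]
  exact (hU t).sub ((hU (t - τ)).comp_sub_const t τ)

theorem integrableOn_Ioi_of_integral_le (hu : Continuous u) (hu0 : ∀ t, 0 ≤ u t) {K : ℝ}
    (hK : ∀ t ≥ 0, ∫ s in 0..t, u s ≤ K) : IntegrableOn u (Ioi 0) := by
  refine integrableOn_Ioi_of_intervalIntegral_norm_bounded K 0 (fun _ => hu.integrableOn_Ioc)
    tendsto_id ?_
  filter_upwards [eventually_ge_atTop 0] with t ht
  simpa only [id, Real.norm_of_nonneg (hu0 _)] using hK t ht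

variable {a μ τ : ℝ}

noncomputable def delayLyapunov (u : ℝ → ℝ) (a τ t : ℝ) : ℝ :=
  u t + a * ∫ s in (t - τ)..t, u s

theorem le_delayLyapunov (hu0 : ∀ t, 0 ≤ u t) (ha : 0 ≤ a) (hτ : 0 ≤ τ) (t : ℝ) :
    u t ≤ delayLyapunov u a τ t := by
  have : 0 ≤ ∫ s in (t - τ)..t, u s := integral_nonneg (by linarith) fun s _ => hu0 s
  unfold delayLyapunov
  nlinarith

theorem antitoneOn_delayLyapunov (hu : Continuous u) (hu0 : ∀ t, 0 ≤ u t) (haμ : a ≤ μ)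
    (hu' : ∀ t > 0, HasDerivAt u (a * u (t - τ) - μ * u t) t) :
    AntitoneOn (delayLyapunov u a τ) (Ici 0) := by
  have hW : ∀ t > 0, HasDerivAt (delayLyapunov u a τ) ((a - μ) * u t) t := fun t ht =>
    ((hu' t ht).add ((hasDerivAt_integral_delay hu τ t).const_mul a)).congr_deriv (by ring)
  have hWc : Continuous (delayLyapunov u a τ) :=
    hu.add (continuous_const.mul (continuous_iff_continuousAt.2 fun t =>
      (hasDerivAt_integral_delay hu τ t).continuousAt))
  refine antitoneOn_of_hasDerivWithinAt_nonpos (convex_Ici 0) hWc.continuousOn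
    (fun t ht => (hW t ?_).hasDerivWithinAt) (fun t ht => ?_)
  · simpa using ht
  · exact mul_nonpos_of_nonpos_of_nonneg (by linarith) (hu0 t)

theorem le_delayLyapunov_zero (hu : Continuous u) (hu0 : ∀ t, 0 ≤ u t) (ha : 0 ≤ a)
    (haμ : a ≤ μ) (hτ : 0 ≤ τ) (hu' : ∀ t > 0, HasDerivAt u (a * u (t - τ) - μ * u t) t)
    {t : ℝ} (ht : 0 ≤ t) : u t ≤ delayLyapunov u a τ 0 :=
  (le_delayLyapunov hu0 ha hτ t).trans
    (antitoneOn_delayLyapunov hu hu0 haμ hu' self_mem_Ici (mem_Ici.2 ht) ht)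

theorem tendsto_zero_of_integrableOn_of_delay (hτ : 0 ≤ τ)
    (hu' : ∀ t > 0, HasDerivAt u (a * u (t - τ) - μ * u t) t) (hint : IntegrableOn u (Ioi 0)) :
    Tendsto u atTop (𝓝 0) := by
  have hdelay : IntegrableOn (fun t => u (t - τ)) (Ioi τ) := by
    simpa [Function.comp_def] using
      ((measurePreserving_sub_right volume τ).integrableOn_comp_preimage
        (measurableEmbedding_subRight τ)).2 hint
  have hint' : IntegrableOn u (Ioi τ) := hint.mono_set (Ioi_subset_Ioi hτ)
  exact tendsto_zero_of_hasDerivAt_of_integrableOn_Ioi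
    (fun t ht => hu' t (hτ.trans_lt ht)) ((hdelay.const_mul a).sub (hint'.const_mul μ)) hint'

end LinearDelay

section NonlinearDelay

variable {x g : ℝ → ℝ} {γ μ τ c : ℝ}

theorem hasDerivAt_mul_exp_integral (hg : Continuous g) {t : ℝ}
    (hx : HasDerivAt x (γ * x (t - τ) * exp (-μ * τ - ∫ s in (t - τ)..t, g s)
      - μ * x t - x t * g t) t) :
    HasDerivAt (fun t => x t * exp (∫ s in 0..t, g s))
      (γ * exp (-μ * τ) * (x (t - τ) * exp (∫ s in 0..(t - τ), g s))
        - μ * (x t * exp (∫ s in 0..t, g s))) t := by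
  refine (hx.mul (hg.integral_hasStrictDerivAt 0 t).hasDerivAt.exp).congr_deriv ?_
  have hexp : exp (-μ * τ - ∫ s in (t - τ)..t, g s) * exp (∫ s in 0..t, g s)
      = exp (-μ * τ) * exp (∫ s in 0..(t - τ), g s) := by
    rw [integral_delay_eq_sub hg, ← exp_add, ← exp_add]
    ring_nf
  linear_combination (γ * x (t - τ)) * hexp

theorem integral_mul_exp_integral_le (hc : 0 < c) (hx : Continuous x) (hg : Continuous g)
    (hx0 : ∀ t, 0 ≤ x t) (hcx : ∀ t, c * x t ≤ g t) {M : ℝ} (hM : ∀ t, ∫ s in 0..t, g s ≤ M)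
    {t : ℝ} (ht : 0 ≤ t) :
    ∫ s in 0..t, x s * exp (∫ r in 0..s, g r) ≤ exp M / c * M := by
  have hG : Continuous fun s => ∫ r in 0..s, g r := continuous_primitive hg.intervalIntegrable 0
  have hpt : ∀ s, x s * exp (∫ r in 0..s, g r) ≤ exp M / c * g s := fun s => by
    have hxg : x s ≤ g s / c := (le_div_iff₀ hc).2 (by linarith [hcx s])
    calc x s * exp (∫ r in 0..s, g r) ≤ g s / c * exp M :=
          mul_le_mul hxg (exp_le_exp.2 (hM s)) (exp_pos _).le ((hx0 s).trans hxg)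
      _ = exp M / c * g s := by ring
  calc ∫ s in 0..t, x s * exp (∫ r in 0..s, g r)
      ≤ ∫ s in 0..t, exp M / c * g s :=
        integral_mono_on ht ((hx.mul (continuous_exp.comp hG)).intervalIntegrable _ _)
          ((hg.intervalIntegrable _ _).const_mul _) fun s _ => hpt s
    _ = exp M / c * ∫ s in 0..t, g s := integral_const_mul _ _
    _ ≤ exp M / c * M := by gcongr; exact hM t

theorem tendsto_zero_of_hasDerivAt_delay (hγ : 0 ≤ γ) (hτ : 0 ≤ τ) (hc : 0 < c)
    (hR : γ * exp (-μ * τ) ≤ μ) (hx : Continuous x) (hg : Continuous g)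
    (hx0 : ∀ t, 0 ≤ x t) (hcx : ∀ t, c * x t ≤ g t)
    (hode : ∀ t > 0, HasDerivAt x (γ * x (t - τ) * exp (-μ * τ - ∫ s in (t - τ)..t, g s)
      - μ * x t - x t * g t) t) :
    Tendsto x atTop (𝓝 0) := by
  set G : ℝ → ℝ := fun t => ∫ s in 0..t, g s with hG
  set u : ℝ → ℝ := fun t => x t * exp (G t) with hu
  have hg0 : ∀ t, 0 ≤ g t := fun t => (mul_nonneg hc.le (hx0 t)).trans (hcx t)
  have hGmono : Monotone G := fun s t hst => by
    have hsub := integral_interval_sub_left (hg.intervalIntegrable (μ := volume) 0 t)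
      (hg.intervalIntegrable 0 s)
    have : 0 ≤ ∫ r in s..t, g r := integral_nonneg hst fun r _ => hg0 r
    linarith
  have huc : Continuous u :=
    hx.mul (continuous_exp.comp (continuous_primitive hg.intervalIntegrable 0))
  have hu0 : ∀ t, 0 ≤ u t := fun t => mul_nonneg (hx0 t) (exp_pos _).le
  have hu' : ∀ t > 0, HasDerivAt u (γ * exp (-μ * τ) * u (t - τ) - μ * u t) t :=
    fun t ht => hasDerivAt_mul_exp_integral hg (hode t ht)
  by_cases hGtop : Tendsto G atTop atTop
  · have hbound : ∀ᶠ t in atTop, x t ≤ delayLyapunov u (γ * exp (-μ * τ)) τ 0 * exp (-G t) := by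
      filter_upwards [eventually_ge_atTop 0] with t ht
      have hxu : x t = u t * exp (-G t) := by rw [hu, mul_assoc, ← exp_add]; simp
      rw [hxu]
      gcongr
      exact le_delayLyapunov_zero huc hu0 (by positivity) hR hτ hu' ht
    have hlim : Tendsto (fun t => delayLyapunov u (γ * exp (-μ * τ)) τ 0 * exp (-G t))
        atTop (𝓝 0) := by
      simpa using (tendsto_exp_atBot.comp (tendsto_neg_atTop_atBot.comp hGtop)).const_mul _
    exact tendsto_of_tendsto_of_tendsto_of_le_of_le' tendsto_const_nhds hlim
      (Eventually.of_forall hx0) hbound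
  · obtain ⟨M, hM⟩ : ∃ M, ∀ t, G t ≤ M := by
      simp only [hGmono.tendsto_atTop_atTop_iff, not_forall, not_exists, not_le] at hGtop
      obtain ⟨M, hM⟩ := hGtop
      exact ⟨M, fun t => (hM t).le⟩
    have hulim : Tendsto u atTop (𝓝 0) := tendsto_zero_of_integrableOn_of_delay hτ hu'
      (integrableOn_Ioi_of_integral_le huc hu0 fun t ht =>
        integral_mul_exp_integral_le hc hx hg hx0 hcx hM ht)
    refine tendsto_of_tendsto_of_tendsto_of_le_of_le' tendsto_const_nhds hulim
      (Eventually.of_forall hx0) ?_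
    filter_upwards [eventually_ge_atTop 0] with t ht
    have hG0 : 0 ≤ G t := by simpa [hG] using hGmono ht
    exact le_mul_of_one_le_right (hx0 t) (one_le_exp hG0)

end NonlinearDelay

theorem tendsto_zero_of_hasDerivAt_delay_of_continuousOn {x g : ℝ → ℝ} {γ μ τ c m : ℝ}
    (hγ : 0 ≤ γ) (hτ : 0 ≤ τ) (hτm : τ ≤ m) (hc : 0 < c) (hR : γ * exp (-μ * τ) ≤ μ)
    (hx : ContinuousOn x (Ici (-m))) (hg : ContinuousOn g (Ici (-m)))
    (hx0 : ∀ t, -m ≤ t → 0 ≤ x t) (hcx : ∀ t, -m ≤ t → c * x t ≤ g t)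
    (hode : ∀ t > 0, HasDerivAt x (γ * x (t - τ) * exp (-μ * τ - ∫ s in (t - τ)..t, g s)
      - μ * x t - x t * g t) t) :
    Tendsto x atTop (𝓝 0) := by
  set r : ℝ → ℝ := fun t => max t (-m)
  have hr : Continuous r := continuous_id.max continuous_const
  have hr_mem : ∀ t, r t ∈ Ici (-m) := fun t => mem_Ici.2 (le_max_right _ _)
  have hr_eq : ∀ t, -m ≤ t → r t = t := fun t ht => max_eq_left ht
  have hlim := tendsto_zero_of_hasDerivAt_delay (x := x ∘ r) (g := g ∘ r) hγ hτ hc hR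
    (hx.comp_continuous hr hr_mem) (hg.comp_continuous hr hr_mem)
    (fun t => hx0 _ (hr_mem t)) (fun t => hcx _ (hr_mem t)) fun t ht => by
      have hloc : x ∘ r =ᶠ[𝓝 t] x := by
        filter_upwards [Ioi_mem_nhds (by linarith : -m < t)] with s hs
        exact congrArg x (hr_eq s (le_of_lt hs))
      have hint : ∫ s in (t - τ)..t, g (r s) = ∫ s in (t - τ)..t, g s := by
        refine integral_congr fun s hs => congrArg g (hr_eq s ?_)
        rw [uIcc_of_le (by linarith)] at hs
        linarith [hs.1]
      refine ((hode t ht).congr_of_eventuallyEq hloc).congr_deriv ?_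
      simp only [Function.comp_apply, hr_eq t (by linarith), hr_eq (t - τ) (by linarith), hint]
  refine hlim.congr' ?_
  filter_upwards [eventually_ge_atTop (-m)] with t ht
  exact congrArg x (hr_eq t ht)

theorem stmt_15_general (γ₁ μ₁ κ₁ α₁ τ₁ γ₂ μ₂ κ₂ α₂ τ₂ : ℝ)
    (hγ₁ : 0 < γ₁) (hκ₁ : 0 < κ₁) (hα₁ : 0 < α₁) (hτ₁ : 0 < τ₁)
    (hγ₂ : 0 < γ₂) (hκ₂ : 0 < κ₂) (hα₂ : 0 < α₂) (hτ₂ : 0 < τ₂)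
    (hR1 : γ₁ * Real.exp (-μ₁ * τ₁) ≤ μ₁) (hR2 : γ₂ * Real.exp (-μ₂ * τ₂) ≤ μ₂)
    (x₁ x₂ : ℝ → ℝ)
    (hx₁_cont : ContinuousOn x₁ (Set.Ici (-(max τ₁ τ₂))))
    (hx₂_cont : ContinuousOn x₂ (Set.Ici (-(max τ₁ τ₂))))
    (hx₁_pos : ∀ t, -(max τ₁ τ₂) ≤ t → 0 < x₁ t)
    (hx₂_pos : ∀ t, -(max τ₁ τ₂) ≤ t → 0 < x₂ t)
    (hx₁_ode : ∀ t > (0 : ℝ), HasDerivAt x₁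
      (γ₁ * x₁ (t - τ₁) *
          Real.exp (-μ₁ * τ₁ - ∫ s in (t - τ₁)..t, (κ₁ * x₁ s + α₂ * x₂ s))
        - μ₁ * x₁ t - κ₁ * (x₁ t) ^ 2 - α₂ * x₁ t * x₂ t) t)
    (hx₂_ode : ∀ t > (0 : ℝ), HasDerivAt x₂
      (γ₂ * x₂ (t - τ₂) *
          Real.exp (-μ₂ * τ₂ - ∫ s in (t - τ₂)..t, (κ₂ * x₂ s + α₁ * x₁ s))
        - μ₂ * x₂ t - κ₂ * (x₂ t) ^ 2 - α₁ * x₁ t * x₂ t) t) :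
    Filter.Tendsto x₁ Filter.atTop (nhds 0) ∧ Filter.Tendsto x₂ Filter.atTop (nhds 0) := by
  constructor
  · refine tendsto_zero_of_hasDerivAt_delay_of_continuousOn (g := fun s => κ₁ * x₁ s + α₂ * x₂ s)
      hγ₁.le hτ₁.le (le_max_left _ _) hκ₁ hR1 hx₁_cont
      ((continuousOn_const.mul hx₁_cont).add (continuousOn_const.mul hx₂_cont))
      (fun t ht => (hx₁_pos t ht).le)
      (fun t ht => le_add_of_nonneg_right (mul_nonneg hα₂.le (hx₂_pos t ht).le))
      fun t ht => (hx₁_ode t ht).congr_deriv (by ring)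
  · refine tendsto_zero_of_hasDerivAt_delay_of_continuousOn (g := fun s => κ₂ * x₂ s + α₁ * x₁ s)
      hγ₂.le hτ₂.le (le_max_right _ _) hκ₂ hR2 hx₂_cont
      ((continuousOn_const.mul hx₂_cont).add (continuousOn_const.mul hx₁_cont))
      (fun t ht => (hx₂_pos t ht).le)
      (fun t ht => le_add_of_nonneg_right (mul_nonneg hα₁.le (hx₁_pos t ht).le))
      fun t ht => (hx₂_ode t ht).congr_deriv (by ring)

/-- In the two-species competition delay model, if `R₀⁽¹⁾ ≤ 1`
and `R₀⁽²⁾ ≤ 1`, every bounded positive solution converges to `E₀ = (0,0)`. -/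
theorem stmt_15 (γ₁ μ₁ κ₁ α₁ τ₁ γ₂ μ₂ κ₂ α₂ τ₂ : ℝ)
    (hγ₁ : 0 < γ₁) (hμ₁ : 0 < μ₁) (hκ₁ : 0 < κ₁) (hα₁ : 0 < α₁) (hτ₁ : 0 < τ₁)
    (hγ₂ : 0 < γ₂) (hμ₂ : 0 < μ₂) (hκ₂ : 0 < κ₂) (hα₂ : 0 < α₂) (hτ₂ : 0 < τ₂)
    (hR1 : γ₁ * Real.exp (-μ₁ * τ₁) ≤ μ₁) (hR2 : γ₂ * Real.exp (-μ₂ * τ₂) ≤ μ₂)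
    (x₁ x₂ : ℝ → ℝ)
    (hx₁_cont : ContinuousOn x₁ (Set.Ici (-(max τ₁ τ₂))))
    (hx₂_cont : ContinuousOn x₂ (Set.Ici (-(max τ₁ τ₂))))
    (hx₁_pos : ∀ t, -(max τ₁ τ₂) ≤ t → 0 < x₁ t)
    (hx₂_pos : ∀ t, -(max τ₁ τ₂) ≤ t → 0 < x₂ t)
    (hx₁_bdd : ∃ B : ℝ, ∀ t, -(max τ₁ τ₂) ≤ t → x₁ t ≤ B)
    (hx₂_bdd : ∃ B : ℝ, ∀ t, -(max τ₁ τ₂) ≤ t → x₂ t ≤ B)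
    (hx₁_ode : ∀ t > (0 : ℝ), HasDerivAt x₁
      (γ₁ * x₁ (t - τ₁) *
          Real.exp (-μ₁ * τ₁ - ∫ s in (t - τ₁)..t, (κ₁ * x₁ s + α₂ * x₂ s))
        - μ₁ * x₁ t - κ₁ * (x₁ t) ^ 2 - α₂ * x₁ t * x₂ t) t)
    (hx₂_ode : ∀ t > (0 : ℝ), HasDerivAt x₂
      (γ₂ * x₂ (t - τ₂) *
          Real.exp (-μ₂ * τ₂ - ∫ s in (t - τ₂)..t, (κ₂ * x₂ s + α₁ * x₁ s))
        - μ₂ * x₂ t - κ₂ * (x₂ t) ^ 2 - α₁ * x₁ t * x₂ t) t) :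
    Filter.Tendsto x₁ Filter.atTop (nhds 0) ∧ Filter.Tendsto x₂ Filter.atTop (nhds 0) :=
  stmt_15_general γ₁ μ₁ κ₁ α₁ τ₁ γ₂ μ₂ κ₂ α₂ τ₂ hγ₁ hκ₁ hα₁ hτ₁ hγ₂ hκ₂ hα₂ hτ₂ hR1 hR2 x₁ x₂
    hx₁_cont hx₂_cont hx₁_pos hx₂_pos hx₁_ode hx₂_ode
end

section
/- For i = 1, 2 let γ_i, μ_i, κ_i, α_i, τ_i > 0 with γ₁·e^{−μ₁τ₁} > μ₁ and γ₂·e^{−μ₂τ₂} ≤ μ₂ (i.e., R₀⁽¹⁾ > 1 and R₀⁽²⁾ ≤ 1), and let x₁* > 0 be the unique positive root of γ₁·e^{−τ₁(μ₁ + κ₁x)} = μ₁ + κ₁x. Then every bounded continuous positive solution (x₁(t), x₂(t)) of the competition system x₁'(t) = γ₁·x₁(t−τ₁)·exp(−μ₁τ₁ − ∫_{t−τ₁}^{t}(κ₁x₁(s) + α₂x₂(s))ds) − μ₁x₁(t) − κ₁x₁²(t) − α₂x₁(t)x₂(t), x₂'(t) = γ₂·x₂(t−τ₂)·exp(−μ₂τ₂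 − ∫_{t−τ₂}^{t}(κ₂x₂(s) + α₁x₁(s))ds) − μ₂x₂(t) − κ₂x₂²(t) − α₁x₁(t)x₂(t) converges to the semi-trivial equilibrium E₁ = (x₁*, 0) as t → ∞. -/
open Set Filter Topology Real

/-!
Since `R₀⁽²⁾ ≤ 1`, the functional `x₂(t) + μ₂ ∫_{t-τ₂}^t x₂` decreases at rate at least
`κ₂ x₂²`, so `x₂` is square integrable; its derivative is bounded, hence `x₂ → 0` (Barbalat).

For the first species put `ρ = μ₁ + κ₁ x₁*`, so that `γ₁ e^{-ρτ₁} = ρ`, and let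
`G' = κ₁ x₁ + α₂ x₂`. Then `v = x₁ e^{G(t) - κ₁ x₁* t}` solves the linear equation
`v' = ρ (v(t - τ₁) - v(t))`, whose solutions converge to a positive constant: the maxima of `v`
over consecutive windows of length `τ₁` decrease, the minima increase, and the two contract
towards each other. Consequently `u = log x₁` satisfies `u' = κ₁ (x₁* - eᵘ) + ε(t)` with
`ε → 0`, which forces `x₁ → x₁*`.
-/

theorem mul_sub_le_sub_of_le_hasDerivAt {f f' : ℝ → ℝ} {a b C : ℝ} (hab : a ≤ b)
    (hf : ∀ t ∈ Icc a b, HasDerivAt f (f' t) t) (hC : ∀ t ∈ Icc a b, C ≤ f' t) :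
    C * (b - a) ≤ f b - f a :=
  (convex_Icc a b).mul_sub_le_image_sub_of_le_deriv
    (fun t ht => (hf t ht).continuousAt.continuousWithinAt)
    (fun t ht => (hf t (interior_subset ht)).differentiableAt.differentiableWithinAt)
    (fun t ht => (hf t (interior_subset ht)).deriv ▸ hC t (interior_subset ht))
    a (left_mem_Icc.2 hab) b (right_mem_Icc.2 hab) hab

theorem eventually_le_of_hasDerivAt_le_neg {f f' : ℝ → ℝ} {T a c : ℝ} (hc : 0 < c)
    (hf : ∀ t ≥ T, HasDerivAt f (f' t) t) (hf' : ∀ t ≥ T, a ≤ f t → f' t ≤ -c) :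
    ∀ᶠ t in atTop, f t ≤ a := by
  obtain ⟨t₀, hT, h₀⟩ : ∃ t₀ ≥ T, f t₀ ≤ a := by
    by_contra! hgt
    have hTb : T ≤ T + (f T - a) / c :=
      le_add_of_nonneg_right (div_nonneg (sub_nonneg.2 (hgt T le_rfl).le) hc.le)
    have hdrop := mul_sub_le_sub_of_le_hasDerivAt hTb (fun t ht => (hf t ht.1).neg)
      fun t ht => le_neg.2 (hf' t ht.1 (hgt t ht.1).le)
    rw [add_sub_cancel_left, mul_div_cancel₀ _ hc.ne', Pi.neg_apply, Pi.neg_apply] at hdrop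
    linarith [hgt _ hTb]
  filter_upwards [eventually_ge_atTop t₀] with t ht
  exact image_le_of_deriv_right_lt_deriv_boundary
    (fun r hr => (hf r (hT.trans hr.1)).continuousAt.continuousWithinAt)
    (fun r hr => (hf r (hT.trans hr.1)).hasDerivWithinAt)
    (B := fun _ => a) (B' := fun _ => 0) h₀ (fun _ => hasDerivAt_const _ _)
    (fun s hs hfs => (hf' s (hT.trans hs.1) hfs.ge).trans_lt (neg_neg_of_pos hc)) ⟨ht, le_rfl⟩

theorem eventually_le_of_hasDerivAt_strictAnti_add {u ε φ : ℝ → ℝ} {T y₀ a : ℝ}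
    (hφ : StrictAnti φ) (hφ₀ : φ y₀ = 0) (hu : ∀ t ≥ T, HasDerivAt u (φ (u t) + ε t) t)
    (hε : Tendsto ε atTop (𝓝 0)) (ha : y₀ < a) : ∀ᶠ t in atTop, u t ≤ a := by
  have hφa : φ a < 0 := hφ₀ ▸ hφ ha
  have hc : 0 < -φ a / 2 := half_pos (neg_pos.2 hφa)
  obtain ⟨T₁, hT₁⟩ := eventually_atTop.1 (hε.eventually (gt_mem_nhds hc))
  refine eventually_le_of_hasDerivAt_le_neg hc (T := max T T₁)
    (fun t ht => hu t (le_of_max_le_left ht)) fun t ht hat => ?_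
  have := hφ.antitone hat
  have := hT₁ t (le_of_max_le_right ht)
  linarith

theorem tendsto_of_hasDerivAt_strictAnti_add {u ε φ : ℝ → ℝ} {T y₀ : ℝ}
    (hφ : StrictAnti φ) (hφ₀ : φ y₀ = 0) (hu : ∀ t ≥ T, HasDerivAt u (φ (u t) + ε t) t)
    (hε : Tendsto ε atTop (𝓝 0)) : Tendsto u atTop (𝓝 y₀) := by
  have hneg : ∀ t ≥ T, HasDerivAt (-u) ((fun y => -φ (-y)) ((-u) t) + (-ε) t) t :=
    fun t ht => (hu t ht).neg.congr_deriv (by simp only [Pi.neg_apply, neg_neg, neg_add])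
  refine tendsto_order.2 ⟨fun a ha => ?_, fun a ha => ?_⟩
  · obtain ⟨b, hab, hby⟩ := exists_between ha
    filter_upwards [eventually_le_of_hasDerivAt_strictAnti_add
      (fun _ _ hxy => neg_lt_neg (hφ (neg_lt_neg hxy))) (by simp [hφ₀]) hneg
      (neg_zero (G := ℝ) ▸ hε.neg) (neg_lt_neg hby)] with t ht
    exact hab.trans_le (le_neg.1 ht |>.trans_eq (neg_neg _))
  · obtain ⟨b, hyb, hba⟩ := exists_between ha
    filter_upwards [eventually_le_of_hasDerivAt_strictAnti_add hφ hφ₀ hu hε hyb] with t ht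
    exact ht.trans_lt hba

theorem tendsto_zero_of_sq_le_deriv {f f' Q q : ℝ → ℝ} {T K B : ℝ}
    (hf : ∀ t ≥ T, HasDerivAt f (f' t) t) (hf' : ∀ t ≥ T, |f' t| ≤ K)
    (hQ : ∀ t ≥ T, HasDerivAt Q (q t) t) (hq : ∀ t ≥ T, f t ^ 2 ≤ q t)
    (hQB : ∀ t ≥ T, Q t ≤ B) : Tendsto f atTop (𝓝 0) := by
  have hK : 0 ≤ K := (abs_nonneg _).trans (hf' T le_rfl)
  have hbdd : BddAbove (Q '' Ici T) := ⟨B, by rintro _ ⟨t, ht, rfl⟩; exact hQB t ht⟩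
  rw [Metric.tendsto_atTop]
  intro e he
  set δ := e / (2 * (K + 1))
  have hδ : 0 < δ := by positivity
  have hKδ : K * δ ≤ e / 2 := by
    rw [show K * δ = e / 2 * (K / (K + 1)) by simp only [δ]; field_simp]
    exact mul_le_of_le_one_right (by positivity) ((div_le_one (by positivity)).2 (by linarith))
  obtain ⟨_, ⟨t₀, ht₀, rfl⟩, hQt₀⟩ := exists_lt_of_lt_csSup ((nonempty_Ici).image Q)
    (sub_lt_self (sSup (Q '' Ici T)) (by positivity : 0 < (e / 2) ^ 2 * δ))
  -- If `e ≤ |f t|` with `t ≥ t₀`, then `|f| ≥ e / 2` on `[t, t + δ]`, so `Q` would gain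
  -- `(e / 2)² δ` there and exceed its supremum.
  refine ⟨t₀, fun t ht => ?_⟩
  have hTt : T ≤ t := le_trans ht₀ ht
  rw [Real.dist_eq, sub_zero]
  by_contra! hft
  have hlarge : ∀ s ∈ Icc t (t + δ), (e / 2) ^ 2 ≤ q s := by
    intro s hs
    have hlip := norm_image_sub_le_of_norm_deriv_le_segment' (f := f) (C := K)
      (fun r hr => (hf r (hTt.trans hr.1)).hasDerivWithinAt)
      (fun r hr => hf' r (hTt.trans hr.1)) s hs
    rw [Real.norm_eq_abs] at hlip
    have hfs : e / 2 ≤ |f s| := by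
      have := abs_sub_abs_le_abs_sub (f t) (f s)
      rw [abs_sub_comm] at this
      nlinarith [hs.2]
    calc (e / 2) ^ 2 ≤ |f s| ^ 2 := pow_le_pow_left₀ (by positivity) hfs 2
      _ = f s ^ 2 := sq_abs _
      _ ≤ q s := hq s (hTt.trans hs.1)
  have hstep := mul_sub_le_sub_of_le_hasDerivAt (le_add_of_nonneg_right hδ.le)
    (fun s hs => hQ s (hTt.trans hs.1)) hlarge
  have hmono := mul_sub_le_sub_of_le_hasDerivAt ht (fun s hs => hQ s (le_trans ht₀ hs.1))
    fun s hs => (sq_nonneg _).trans (hq s (le_trans ht₀ hs.1))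
  have hsup := le_csSup hbdd (mem_image_of_mem Q (mem_Ici.2 (by linarith : T ≤ t + δ)))
  nlinarith

theorem hasDerivAt_integral_of_continuousOn_Ici {f : ℝ → ℝ} {a t : ℝ}
    (hf : ContinuousOn f (Ici a)) (ht : a < t) :
    HasDerivAt (fun u => ∫ x in a..u, f x) (f t) t :=
  intervalIntegral.integral_hasDerivAt_right
    ((hf.mono Icc_subset_Ici_self).intervalIntegrable_of_Icc ht.le)
    ((hf.mono Ioi_subset_Ici_self).stronglyMeasurableAtFilter isOpen_Ioi t ht)
    (hf.continuousAt (Ici_mem_nhds ht))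

theorem continuousOn_integral_of_continuousOn_Ici {f : ℝ → ℝ} {a : ℝ}
    (hf : ContinuousOn f (Ici a)) : ContinuousOn (fun u => ∫ x in a..u, f x) (Ici a) := by
  intro t ht
  have hle : a ≤ t + 1 := by linarith [mem_Ici.1 ht]
  have hprim := intervalIntegral.continuousOn_primitive_interval (μ := MeasureTheory.volume)
    (a := a) (b := t + 1)
    (by rw [uIcc_of_le hle]; exact (hf.mono Icc_subset_Ici_self).integrableOn_Icc)
  refine (hprim t ?_).mono_of_mem_nhdsWithin ?_
  · rw [uIcc_of_le hle]; exact ⟨ht, by linarith⟩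
  · rw [uIcc_of_le hle, ← Ici_inter_Iic]
    exact inter_mem_nhdsWithin _ (Iic_mem_nhds (lt_add_one t))

theorem tendsto_zero_of_hasDerivAt_le_delay_sub_sq {x x' : ℝ → ℝ} {μ κ τ K : ℝ}
    (hμ : 0 ≤ μ) (hκ : 0 < κ) (hτ : 0 ≤ τ) (hx_cont : ContinuousOn x (Ici (-τ)))
    (hx_nonneg : ∀ t ≥ -τ, 0 ≤ x t) (hx : ∀ t > 0, HasDerivAt x (x' t) t)
    (hK : ∀ t > 0, |x' t| ≤ K) (hx' : ∀ t > 0, x' t ≤ μ * x (t - τ) - μ * x t - κ * x t ^ 2) :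
    Tendsto x atTop (𝓝 0) := by
  set H := fun u => ∫ s in (-τ)..u, x s
  have hH : ∀ t > -τ, HasDerivAt H (x t) t :=
    fun t ht => hasDerivAt_integral_of_continuousOn_Ici hx_cont ht
  set y := fun t => x t + μ * (H t - H (t - τ))
  have hy : ∀ t > 0, HasDerivAt y (x' t + μ * (x t - x (t - τ))) t := fun t ht =>
    (hx t ht).add (((hH t (by linarith)).sub
      ((hH (t - τ) (by linarith)).comp_sub_const t τ)).const_mul μ)
  have hy_nonneg : ∀ t > 0, 0 ≤ y t := by
    intro t ht
    have hint : ∀ a b, -τ ≤ a → a ≤ b → IntervalIntegrable x MeasureTheory.volume a b :=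
      fun a b ha hab => (hx_cont.mono fun r hr => ha.trans hr.1).intervalIntegrable_of_Icc hab
    have hwin : 0 ≤ H t - H (t - τ) := by
      rw [intervalIntegral.integral_interval_sub_left (hint _ _ le_rfl (by linarith))
        (hint _ _ le_rfl (by linarith))]
      exact intervalIntegral.integral_nonneg (by linarith)
        fun s hs => hx_nonneg s (by linarith [hs.1])
    have := hx_nonneg t (by linarith)
    have := mul_nonneg hμ hwin
    simp only [y]
    linarith
  refine tendsto_zero_of_sq_le_deriv (T := 1) (B := 0) (Q := fun t => -y t / κ)
    (fun t ht => hx t (by linarith)) (fun t ht => hK t (by linarith))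
    (fun t ht => (hy t (by linarith)).neg.div_const κ) (fun t ht => ?_)
    fun t ht => div_nonpos_of_nonpos_of_nonneg (neg_nonpos.2 (hy_nonneg t (by linarith))) hκ.le
  rw [le_div_iff₀ hκ]
  linarith [hx' t (by linarith)]

theorem tendsto_zero_of_delay_logistic_of_le_one {γ μ κ τ B C : ℝ} {x I h : ℝ → ℝ}
    (hγ : 0 ≤ γ) (hμ : 0 ≤ μ) (hκ : 0 < κ) (hτ : 0 ≤ τ) (hR : γ * exp (-μ * τ) ≤ μ)
    (hx_cont : ContinuousOn x (Ici (-τ))) (hx_nonneg : ∀ t ≥ -τ, 0 ≤ x t)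
    (hx_le : ∀ t ≥ -τ, x t ≤ B) (hI : ∀ t > 0, 0 ≤ I t) (hh : ∀ t > 0, 0 ≤ h t ∧ h t ≤ C)
    (hx : ∀ t > 0, HasDerivAt x
      (γ * x (t - τ) * exp (-μ * τ - I t) - μ * x t - κ * x t ^ 2 - h t * x t) t) :
    Tendsto x atTop (𝓝 0) := by
  have hbirth : ∀ t > 0, 0 ≤ γ * x (t - τ) * exp (-μ * τ - I t) ∧
      γ * x (t - τ) * exp (-μ * τ - I t) ≤ μ * x (t - τ) := by
    intro t ht
    have hxτ := hx_nonneg (t - τ) (by linarith)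
    refine ⟨by positivity, ?_⟩
    calc γ * x (t - τ) * exp (-μ * τ - I t) ≤ γ * x (t - τ) * exp (-μ * τ) := by
          gcongr; linarith [hI t ht]
      _ = γ * exp (-μ * τ) * x (t - τ) := by ring
      _ ≤ μ * x (t - τ) := by gcongr
  refine tendsto_zero_of_hasDerivAt_le_delay_sub_sq (K := μ * B + κ * B ^ 2 + C * B)
    hμ hκ hτ hx_cont hx_nonneg hx (fun t ht => ?_) (fun t ht => ?_)
  · obtain ⟨hb₀, hb⟩ := hbirth t ht
    obtain ⟨hh₀, hhC⟩ := hh t ht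
    have hxt := hx_nonneg t (by linarith)
    have hxtB := hx_le t (by linarith)
    have hB : 0 ≤ B := hxt.trans hxtB
    have hC : 0 ≤ C := hh₀.trans hhC
    rw [show ∀ b, b - μ * x t - κ * x t ^ 2 - h t * x t
      = b - (μ * x t + κ * x t ^ 2 + h t * x t) from fun b => by ring]
    refine abs_sub_le_of_nonneg_of_le hb₀ ?_ (by positivity) (by gcongr)
    calc _ ≤ μ * x (t - τ) := hb
      _ ≤ μ * B := by gcongr; exact hx_le _ (by linarith)
      _ ≤ _ := by nlinarith
  · have := (hbirth t ht).2
    have := (hh t ht).1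
    have := hx_nonneg t (by linarith)
    nlinarith

structure IsDelayRelaxation (ρ τ : ℝ) (v : ℝ → ℝ) : Prop where
  continuousOn : ContinuousOn v (Ici (-τ))
  hasDerivAt : ∀ t > 0, HasDerivAt v (ρ * (v (t - τ) - v t)) t

-- The supremum over the window `[(n - 1)τ, nτ]`; `-windowSup (-v) τ n` is the infimum.
noncomputable def windowSup (v : ℝ → ℝ) (τ : ℝ) (n : ℕ) : ℝ :=
  sSup (v '' Icc (n * τ - τ) (n * τ))

namespace IsDelayRelaxation

variable {ρ τ : ℝ} {v : ℝ → ℝ}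

theorem neg (hv : IsDelayRelaxation ρ τ v) : IsDelayRelaxation ρ τ (-v) where
  continuousOn := hv.continuousOn.neg
  hasDerivAt t ht := (hv.hasDerivAt t ht).neg.congr_deriv (by simp only [Pi.neg_apply]; ring)

theorem exp_mul_sub_le (hv : IsDelayRelaxation ρ τ v) (hρ : 0 ≤ ρ) (hτ : 0 ≤ τ) {s t K : ℝ}
    (hs : 0 ≤ s) (hst : s ≤ t) (hK : ∀ r ∈ Icc (s - τ) (t - τ), v r ≤ K) :
    exp (ρ * t) * (v t - K) ≤ exp (ρ * s) * (v s - K) := by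
  have hderiv : ∀ r > 0, HasDerivAt (fun r => exp (ρ * r) * (v r - K))
      (ρ * exp (ρ * r) * (v (r - τ) - K)) r := fun r hr =>
    (((hasDerivAt_id' r).const_mul ρ).exp.mul ((hv.hasDerivAt r hr).sub_const K)).congr_deriv
      (by ring)
  refine antitoneOn_of_hasDerivWithinAt_nonpos (f := fun r => exp (ρ * r) * (v r - K))
    (f' := fun r => ρ * exp (ρ * r) * (v (r - τ) - K))
    (convex_Icc s t) ?_ (fun r hr => ?_) (fun r hr => ?_)
    (left_mem_Icc.2 hst) (right_mem_Icc.2 hst) hst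
  · exact (by fun_prop : Continuous fun r => exp (ρ * r)).continuousOn.mul
      ((hv.continuousOn.mono fun r hr => by simp only [mem_Ici]; linarith [hr.1]).sub
        continuousOn_const)
  · rw [interior_Icc] at hr
    exact (hderiv r (hs.trans_lt hr.1)).hasDerivWithinAt
  · rw [interior_Icc] at hr
    exact mul_nonpos_of_nonneg_of_nonpos (by positivity)
      (sub_nonpos.2 (hK (r - τ) ⟨by linarith [hr.1], by linarith [hr.2]⟩))

theorem le_of_forall_le_on_Icc (hv : IsDelayRelaxation ρ τ v) (hρ : 0 ≤ ρ) (hτ : 0 < τ)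
    {s K : ℝ} (hs : 0 ≤ s) (hK : ∀ r ∈ Icc (s - τ) s, v r ≤ K) {t : ℝ} (ht : s - τ ≤ t) :
    v t ≤ K := by
  have hsteps : ∀ n : ℕ, ∀ r ∈ Icc (s - τ) (s + n * τ), v r ≤ K := by
    intro n
    induction n with
    | zero => simpa using hK
    | succ n ih =>
      intro r hr
      push_cast at hr
      by_cases hrn : r ≤ s + n * τ
      · exact ih r ⟨hr.1, hrn⟩
      have hnτ : 0 ≤ (n : ℝ) * τ := by positivity
      have hdecay := hv.exp_mul_sub_le hρ hτ.le (add_nonneg hs hnτ) (not_le.1 hrn).le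
        fun q hq => ih q ⟨by linarith [hq.1], by linarith [hq.2, hr.2]⟩
      have hend : v (s + n * τ) - K ≤ 0 := sub_nonpos.2 (ih _ ⟨by linarith, le_rfl⟩)
      have hr' : exp (ρ * r) * (v r - K) ≤ 0 :=
        hdecay.trans (mul_nonpos_of_nonneg_of_nonpos (exp_pos _).le hend)
      exact sub_nonpos.1 (nonpos_of_mul_nonpos_right hr' (exp_pos _))
  obtain ⟨n, hn⟩ := exists_nat_ge ((t - s) / τ)
  rw [div_le_iff₀ hτ] at hn
  exact hsteps n t ⟨ht, by linarith⟩

theorem le_sub_exp_mul (hv : IsDelayRelaxation ρ τ v) (hρ : 0 ≤ ρ) (hτ : 0 ≤ τ) {σ t d K : ℝ}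
    (hσ : 0 ≤ σ) (hK : ∀ r ≥ σ - τ, v r ≤ K) (hσt : σ ≤ t) (htd : t ≤ σ + d) :
    v t ≤ K - exp (-(ρ * d)) * (K - v σ) := by
  have hdecay := hv.exp_mul_sub_le hρ hτ hσ hσt (K := K) fun r hr => hK r hr.1
  have hexp : exp (-(ρ * d)) * exp (ρ * t) ≤ exp (ρ * σ) := by
    rw [← exp_add]
    exact exp_le_exp.2 (by nlinarith)
  have hvσ : v σ - K ≤ 0 := sub_nonpos.2 (hK σ (by linarith))
  have h := hdecay.trans (mul_le_mul_of_nonpos_right hexp hvσ)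
  have h' : exp (ρ * t) * (v t - K) ≤ exp (ρ * t) * (exp (-(ρ * d)) * (v σ - K)) := by
    linarith
  have := le_of_mul_le_mul_left h' (exp_pos _)
  linarith

theorem isCompact_image_window (hv : IsDelayRelaxation ρ τ v) (hτ : 0 ≤ τ) (n : ℕ) :
    IsCompact (v '' Icc (n * τ - τ) (n * τ)) := by
  have hnτ : 0 ≤ (n : ℝ) * τ := by positivity
  exact isCompact_Icc.image_of_continuousOn
    (hv.continuousOn.mono fun r hr => by simp only [mem_Ici]; linarith [hr.1])

theorem le_windowSup (hv : IsDelayRelaxation ρ τ v) (hτ : 0 ≤ τ) {n : ℕ} {r : ℝ}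
    (hr : r ∈ Icc (n * τ - τ) (n * τ)) : v r ≤ windowSup v τ n :=
  le_csSup (hv.isCompact_image_window hτ n).bddAbove (mem_image_of_mem v hr)

theorem exists_eq_windowSup (hv : IsDelayRelaxation ρ τ v) (hτ : 0 ≤ τ) (n : ℕ) :
    ∃ σ ∈ Icc (n * τ - τ) (n * τ), v σ = windowSup v τ n :=
  (hv.isCompact_image_window hτ n).sSup_mem ((nonempty_Icc.2 (by linarith)).image v)

theorem le_windowSup_of_ge (hv : IsDelayRelaxation ρ τ v) (hρ : 0 ≤ ρ) (hτ : 0 < τ) (n : ℕ)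
    {t : ℝ} (ht : n * τ - τ ≤ t) : v t ≤ windowSup v τ n :=
  hv.le_of_forall_le_on_Icc hρ hτ (by positivity) (fun _ hr => hv.le_windowSup hτ.le hr) ht

theorem windowSup_antitone (hv : IsDelayRelaxation ρ τ v) (hρ : 0 ≤ ρ) (hτ : 0 < τ) :
    Antitone (windowSup v τ) := by
  refine antitone_nat_of_succ_le fun n => csSup_le ((nonempty_Icc.2 (by linarith)).image v) ?_
  rintro _ ⟨r, hr, rfl⟩
  push_cast at hr
  exact hv.le_windowSup_of_ge hρ hτ n (by linarith [hr.1])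

-- Along window `n + 2`, `v` keeps weight at least `e^{-2ρτ}` on its minimum over window `n + 1`.
theorem windowSup_add_two_le (hv : IsDelayRelaxation ρ τ v) (hρ : 0 ≤ ρ) (hτ : 0 < τ)
    (n : ℕ) :
    windowSup v τ (n + 2) ≤ windowSup v τ n
      - exp (-(ρ * (2 * τ))) * (windowSup v τ n - -windowSup (-v) τ (n + 1)) := by
  obtain ⟨σ, hσ, hσmin⟩ := hv.neg.exists_eq_windowSup hτ.le (n + 1)
  rw [← hσmin, Pi.neg_apply, neg_neg]
  push_cast at hσ
  have hnτ : 0 ≤ (n : ℝ) * τ := by positivity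
  refine csSup_le ((nonempty_Icc.2 (by linarith)).image v) ?_
  rintro _ ⟨t, ht, rfl⟩
  push_cast at ht
  exact hv.le_sub_exp_mul hρ hτ.le (by linarith [hσ.1])
    (fun r hr => hv.le_windowSup_of_ge hρ hτ n (by linarith [hσ.1]))
    (by linarith [hσ.2, ht.1]) (by linarith [hσ.1, ht.2])

theorem exists_tendsto (hv : IsDelayRelaxation ρ τ v) (hρ : 0 ≤ ρ) (hτ : 0 < τ)
    (hpos : ∀ t ∈ Icc (-τ) 0, 0 < v t) : ∃ c > 0, Tendsto v atTop (𝓝 c) := by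
  set U := windowSup v τ
  set L := fun n => -windowSup (-v) τ n
  have hU : Antitone U := hv.windowSup_antitone hρ hτ
  have hL : Monotone L := fun m n hmn => neg_le_neg (hv.neg.windowSup_antitone hρ hτ hmn)
  have hUv : ∀ (n : ℕ) t, n * τ - τ ≤ t → v t ≤ U n :=
    fun n _ ht => hv.le_windowSup_of_ge hρ hτ n ht
  have hLv : ∀ (n : ℕ) t, n * τ - τ ≤ t → L n ≤ v t := fun n t ht =>
    neg_le.1 (hv.neg.le_windowSup_of_ge hρ hτ n ht)
  have hLU : ∀ n, L n ≤ U n := fun n =>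
    (hLv n (n * τ) (by linarith)).trans (hUv n _ (by linarith))
  obtain ⟨A, hA⟩ : ∃ A, Tendsto U atTop (𝓝 A) := ⟨_, tendsto_atTop_ciInf hU
    ⟨L 0, by rintro _ ⟨n, rfl⟩; exact (hL (Nat.zero_le n)).trans (hLU n)⟩⟩
  obtain ⟨B, hB⟩ : ∃ B, Tendsto L atTop (𝓝 B) := ⟨_, tendsto_atTop_ciSup hL
    ⟨U 0, by rintro _ ⟨n, rfl⟩; exact (hLU n).trans (hU (Nat.zero_le n))⟩⟩
  have hBA : B ≤ A := le_of_tendsto_of_tendsto' hB hA hLU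
  have hAB : A ≤ B := by
    have hcontr := le_of_tendsto_of_tendsto' (hA.comp (tendsto_add_atTop_nat 2))
      (hA.sub ((hA.sub (hB.comp (tendsto_add_atTop_nat 1))).const_mul _))
      (hv.windowSup_add_two_le hρ hτ)
    nlinarith [exp_pos (-(ρ * (2 * τ)))]
  obtain ⟨σ, hσ, hσmin⟩ := hv.neg.exists_eq_windowSup hτ.le 0
  have hL0 : 0 < L 0 := by
    simp only [L, ← hσmin, Pi.neg_apply, neg_neg]
    exact hpos σ (by simpa using hσ)
  refine ⟨A, hL0.trans_le ((hL.ge_of_tendsto hB 0).trans hBA),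
    tendsto_order.2 ⟨fun a ha => ?_, fun a ha => ?_⟩⟩
  · obtain ⟨N, hN⟩ := (hB.eventually (lt_mem_nhds (ha.trans_le hAB))).exists
    filter_upwards [eventually_ge_atTop (N * τ)] with t ht
    exact hN.trans_le (hLv N t (by linarith))
  · obtain ⟨N, hN⟩ := (hA.eventually (gt_mem_nhds ha)).exists
    filter_upwards [eventually_ge_atTop (N * τ)] with t ht
    exact (hUv N t (by linarith)).trans_lt hN

end IsDelayRelaxation

theorem isDelayRelaxation_mul_exp {γ μ c τ : ℝ} {x g G : ℝ → ℝ}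
    (hc : γ * exp (-τ * (μ + c)) = μ + c) (hx_cont : ContinuousOn x (Ici (-τ)))
    (hG_cont : ContinuousOn G (Ici (-τ))) (hG : ∀ t > 0, HasDerivAt G (g t) t)
    (hx : ∀ t > 0, HasDerivAt x
      (γ * x (t - τ) * exp (-μ * τ - (G t - G (t - τ))) - μ * x t - x t * g t) t) :
    IsDelayRelaxation (μ + c) τ (fun t => x t * exp (G t - c * t)) where
  continuousOn := hx_cont.mul (hG_cont.sub (continuousOn_const.mul continuousOn_id)).rexp
  hasDerivAt t ht := by
    have hshift : exp (-μ * τ - (G t - G (t - τ))) * exp (G t - c * t)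
        = exp (-τ * (μ + c)) * exp (G (t - τ) - c * (t - τ)) := by
      rw [← exp_add, ← exp_add]; ring_nf
    refine ((hx t ht).mul ((hG t ht).sub ((hasDerivAt_id' t).const_mul c)).exp).congr_deriv ?_
    linear_combination
      (γ * x (t - τ)) * hshift + x (t - τ) * exp (G (t - τ) - c * (t - τ)) * hc

theorem tendsto_of_delay_logistic {γ μ κ τ L : ℝ} {x p : ℝ → ℝ} (hμ : 0 ≤ μ) (hκ : 0 < κ)
    (hτ : 0 < τ) (hL : 0 < L) (hL_eq : γ * exp (-τ * (μ + κ * L)) = μ + κ * L)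
    (hx_cont : ContinuousOn x (Ici (-τ))) (hx_pos : ∀ t ≥ -τ, 0 < x t)
    (hp_cont : ContinuousOn p (Ici (-τ))) (hp : Tendsto p atTop (𝓝 0))
    (hx : ∀ t > 0, HasDerivAt x
      (γ * x (t - τ) * exp (-μ * τ - ∫ s in (t - τ)..t, (κ * x s + p s))
        - μ * x t - κ * x t ^ 2 - p t * x t) t) :
    Tendsto x atTop (𝓝 L) := by
  set g := fun s => κ * x s + p s
  have hg : ContinuousOn g (Ici (-τ)) := (continuousOn_const.mul hx_cont).add hp_cont
  set G := fun u => ∫ s in (-τ)..u, g s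
  have hG : ∀ t > -τ, HasDerivAt G (g t) t :=
    fun t ht => hasDerivAt_integral_of_continuousOn_Ici hg ht
  set ρ := μ + κ * L
  set v := fun t => x t * exp (G t - κ * L * t)
  have hv : IsDelayRelaxation ρ τ v := by
    refine isDelayRelaxation_mul_exp hL_eq hx_cont
      (continuousOn_integral_of_continuousOn_Ici hg) (fun t ht => hG t (by linarith))
      fun t ht => (hx t ht).congr_deriv ?_
    have hint : ∀ b, -τ ≤ b → IntervalIntegrable g MeasureTheory.volume (-τ) b :=
      fun b hb => (hg.mono Icc_subset_Ici_self).intervalIntegrable_of_Icc hb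
    rw [intervalIntegral.integral_interval_sub_left (hint t (by linarith))
      (hint _ (by linarith))]
    ring
  have hv_pos : ∀ t ≥ -τ, 0 < v t := fun t ht => mul_pos (hx_pos t ht) (exp_pos _)
  obtain ⟨c, hc, hvc⟩ := hv.exists_tendsto (by positivity) hτ fun t ht => hv_pos t ht.1
  set u := fun t => log (v t) - (G t - κ * L * t)
  have hxu : ∀ t ≥ -τ, exp (u t) = x t := fun t ht => by
    rw [exp_sub, exp_log (hv_pos t ht), mul_div_cancel_right₀ _ (exp_pos _).ne']
  set ε := fun t => ρ * (v (t - τ) - v t) / v t - p t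
  have hε : Tendsto ε atTop (𝓝 0) := by
    have hshift : Tendsto (fun t => v (t - τ)) atTop (𝓝 c) :=
      hvc.comp (tendsto_atTop_add_const_right _ (-τ) tendsto_id)
    simpa using (((hshift.sub hvc).const_mul ρ).div hvc hc.ne').sub hp
  have hu : ∀ t ≥ 1, HasDerivAt u ((fun y => κ * (L - exp y)) (u t) + ε t) t := fun t ht =>
    (((hv.hasDerivAt t (by linarith)).log (hv_pos t (by linarith)).ne').sub
      ((hG t (by linarith)).sub ((hasDerivAt_id' t).const_mul (κ * L)))).congr_deriv
      (by beta_reduce; rw [hxu t (by linarith)]; ring)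
  have hlim := (continuous_exp.tendsto _).comp
    (tendsto_of_hasDerivAt_strictAnti_add (y₀ := log L)
      (fun _ _ hab => mul_lt_mul_of_pos_left (sub_lt_sub_left (exp_lt_exp.2 hab) L) hκ)
      (by simp [exp_log hL]) hu hε)
  rw [exp_log hL] at hlim
  exact hlim.congr' (eventually_atTop.2 ⟨-τ, hxu⟩)

theorem stmt_16_general (γ₁ μ₁ κ₁ α₁ τ₁ γ₂ μ₂ κ₂ α₂ τ₂ x₁s : ℝ)
    (hμ₁ : 0 < μ₁) (hκ₁ : 0 < κ₁) (hα₁ : 0 < α₁) (hτ₁ : 0 < τ₁)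
    (hγ₂ : 0 < γ₂) (hμ₂ : 0 < μ₂) (hκ₂ : 0 < κ₂) (hτ₂ : 0 < τ₂)
    (hR2 : γ₂ * Real.exp (-μ₂ * τ₂) ≤ μ₂)
    (hx₁s : 0 < x₁s) (hx₁s_eq : γ₁ * Real.exp (-τ₁ * (μ₁ + κ₁ * x₁s)) = μ₁ + κ₁ * x₁s)
    (x₁ x₂ : ℝ → ℝ)
    (hx₁_cont : ContinuousOn x₁ (Set.Ici (-(max τ₁ τ₂))))
    (hx₂_cont : ContinuousOn x₂ (Set.Ici (-(max τ₁ τ₂))))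
    (hx₁_pos : ∀ t, -(max τ₁ τ₂) ≤ t → 0 < x₁ t)
    (hx₂_pos : ∀ t, -(max τ₁ τ₂) ≤ t → 0 < x₂ t)
    (hx₁_bdd : ∃ B : ℝ, ∀ t, -(max τ₁ τ₂) ≤ t → x₁ t ≤ B)
    (hx₂_bdd : ∃ B : ℝ, ∀ t, -(max τ₁ τ₂) ≤ t → x₂ t ≤ B)
    (hx₁_ode : ∀ t > (0 : ℝ), HasDerivAt x₁
      (γ₁ * x₁ (t - τ₁) *
          Real.exp (-μ₁ * τ₁ - ∫ s in (t - τ₁)..t, (κ₁ * x₁ s + α₂ * x₂ s))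
        - μ₁ * x₁ t - κ₁ * (x₁ t) ^ 2 - α₂ * x₁ t * x₂ t) t)
    (hx₂_ode : ∀ t > (0 : ℝ), HasDerivAt x₂
      (γ₂ * x₂ (t - τ₂) *
          Real.exp (-μ₂ * τ₂ - ∫ s in (t - τ₂)..t, (κ₂ * x₂ s + α₁ * x₁ s))
        - μ₂ * x₂ t - κ₂ * (x₂ t) ^ 2 - α₁ * x₁ t * x₂ t) t) :
    Filter.Tendsto x₁ Filter.atTop (nhds x₁s) ∧ Filter.Tendsto x₂ Filter.atTop (nhds 0) := by
  have hτ₁le : -(max τ₁ τ₂) ≤ -τ₁ := neg_le_neg (le_max_left _ _)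
  have hτ₂le : -(max τ₁ τ₂) ≤ -τ₂ := neg_le_neg (le_max_right _ _)
  obtain ⟨B₁, hB₁⟩ := hx₁_bdd
  obtain ⟨B₂, hB₂⟩ := hx₂_bdd
  have hx₂_lim : Tendsto x₂ atTop (𝓝 0) := by
    refine tendsto_zero_of_delay_logistic_of_le_one (C := α₁ * B₁) (h := fun t => α₁ * x₁ t)
      hγ₂.le hμ₂.le hκ₂ hτ₂.le hR2 (hx₂_cont.mono (Ici_subset_Ici.2 hτ₂le))
      (fun t ht => (hx₂_pos t (hτ₂le.trans ht)).le) (fun t ht => hB₂ t (hτ₂le.trans ht))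
      (fun t ht => intervalIntegral.integral_nonneg (by linarith) fun s hs => ?_)
      (fun t ht => ⟨?_, ?_⟩) hx₂_ode
    · have := hx₁_pos s (by linarith [hs.1, hτ₂le])
      have := hx₂_pos s (by linarith [hs.1, hτ₂le])
      positivity
    · have := hx₁_pos t (by linarith [hτ₂le])
      positivity
    · exact mul_le_mul_of_nonneg_left (hB₁ t (by linarith [hτ₂le])) hα₁.le
  refine ⟨tendsto_of_delay_logistic (p := fun t => α₂ * x₂ t) hμ₁.le hκ₁ hτ₁ hx₁s hx₁s_eq
    (hx₁_cont.mono (Ici_subset_Ici.2 hτ₁le)) (fun t ht => hx₁_pos t (hτ₁le.trans ht))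
    ((continuousOn_const.mul hx₂_cont).mono (Ici_subset_Ici.2 hτ₁le))
    (by simpa using hx₂_lim.const_mul α₂) fun t ht => (hx₁_ode t ht).congr_deriv (by ring),
    hx₂_lim⟩

/-- In the two-species competition delay model, if `R₀⁽¹⁾ > 1` and `R₀⁽²⁾ ≤ 1`,
every bounded positive solution converges to the semi-trivial equilibrium
`E₁ = (x₁*, 0)`, where `x₁*` is the positive root of `γ₁e^{-τ₁(μ₁+κ₁x)} = μ₁+κ₁x`. -/
theorem stmt_16 (γ₁ μ₁ κ₁ α₁ τ₁ γ₂ μ₂ κ₂ α₂ τ₂ x₁s : ℝ)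
    (hγ₁ : 0 < γ₁) (hμ₁ : 0 < μ₁) (hκ₁ : 0 < κ₁) (hα₁ : 0 < α₁) (hτ₁ : 0 < τ₁)
    (hγ₂ : 0 < γ₂) (hμ₂ : 0 < μ₂) (hκ₂ : 0 < κ₂) (hα₂ : 0 < α₂) (hτ₂ : 0 < τ₂)
    (hR1 : μ₁ < γ₁ * Real.exp (-μ₁ * τ₁)) (hR2 : γ₂ * Real.exp (-μ₂ * τ₂) ≤ μ₂)
    (hx₁s : 0 < x₁s) (hx₁s_eq : γ₁ * Real.exp (-τ₁ * (μ₁ + κ₁ * x₁s)) = μ₁ + κ₁ * x₁s)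
    (x₁ x₂ : ℝ → ℝ)
    (hx₁_cont : ContinuousOn x₁ (Set.Ici (-(max τ₁ τ₂))))
    (hx₂_cont : ContinuousOn x₂ (Set.Ici (-(max τ₁ τ₂))))
    (hx₁_pos : ∀ t, -(max τ₁ τ₂) ≤ t → 0 < x₁ t)
    (hx₂_pos : ∀ t, -(max τ₁ τ₂) ≤ t → 0 < x₂ t)
    (hx₁_bdd : ∃ B : ℝ, ∀ t, -(max τ₁ τ₂) ≤ t → x₁ t ≤ B)
    (hx₂_bdd : ∃ B : ℝ, ∀ t, -(max τ₁ τ₂) ≤ t → x₂ t ≤ B)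
    (hx₁_ode : ∀ t > (0 : ℝ), HasDerivAt x₁
      (γ₁ * x₁ (t - τ₁) *
          Real.exp (-μ₁ * τ₁ - ∫ s in (t - τ₁)..t, (κ₁ * x₁ s + α₂ * x₂ s))
        - μ₁ * x₁ t - κ₁ * (x₁ t) ^ 2 - α₂ * x₁ t * x₂ t) t)
    (hx₂_ode : ∀ t > (0 : ℝ), HasDerivAt x₂
      (γ₂ * x₂ (t - τ₂) *
          Real.exp (-μ₂ * τ₂ - ∫ s in (t - τ₂)..t, (κ₂ * x₂ s + α₁ * x₁ s))
        - μ₂ * x₂ t - κ₂ * (x₂ t) ^ 2 - α₁ * x₁ t * x₂ t) t) :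
    Filter.Tendsto x₁ Filter.atTop (nhds x₁s) ∧ Filter.Tendsto x₂ Filter.atTop (nhds 0) :=
  stmt_16_general γ₁ μ₁ κ₁ α₁ τ₁ γ₂ μ₂ κ₂ α₂ τ₂ x₁s hμ₁ hκ₁ hα₁ hτ₁ hγ₂ hμ₂ hκ₂ hτ₂ hR2 hx₁s hx₁s_eq
    x₁ x₂ hx₁_cont hx₂_cont hx₁_pos hx₂_pos hx₁_bdd hx₂_bdd hx₁_ode hx₂_ode
end
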